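/- Fix n ∈ ℕ and a finite set of timestamps T = {t₁ < ... < t_n} ⊂ ℝ. On the set U_{n,ℝ,T} of univariate time series of length exactly n with timestamps t₁,...,t_n and nonzero real values, the elastic inner product built from f(a,b)=a·b and g_ν(t,t')=exp(−ν|t−t'|²) converges pointwise, as ν → ∞, to the Euclidean inner product: lim_{ν→∞} eip_ν(A,B) = Σ_{i=1}^n a(i)·b(i). -/

import Mathlib

noncomputable section

/-- A discrete time series is represented as a list of (timestamp, value) pairs,
stored in strictly *decreasing* timestamp order (head = last sample).
`IsTS` says timestamps strictly decrease along the list and no spatial value is zero,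
i.e. the list represents an element of `U*` (the empty list being `Ω`). -/
def IsTS {S : Type*} [Zero S] (l : List (ℝ × S)) : Prop :=
  l.Chain' (fun x y => y.1 < x.1) ∧ ∀ p ∈ l, p.2 ≠ (0 : S)

/-- The recursive elastic product with parameters `α β ξ` and functions `f`, `g`:
`ep(A₁ᵖ,B₁ᵠ) = α·ep(A₁ᵖ⁻¹,B₁ᵠ) + β·ep(A₁ᵖ⁻¹,B₁ᵠ⁻¹) + f(a(p),b(q))·g(t_{a(p)},t_{b(q)}) + α·ep(A₁ᵖ,B₁ᵠ⁻¹)`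
with base case `ep(A,Ω) = ep(Ω,B) = ξ`. -/
def ep {S : Type*} (f : S → S → ℝ) (g : ℝ → ℝ → ℝ) (α β ξ : ℝ) :
    List (ℝ × S) → List (ℝ × S) → ℝ
  | [], _ => ξ
  | _ :: _, [] => ξ
  | (t, a) :: A, (u, b) :: B =>
      α * ep f g α β ξ A ((u, b) :: B) + β * ep f g α β ξ A B
        + f a b * g t u + α * ep f g α β ξ ((t, a) :: A) B
  termination_by A B => A.length + B.length


open Classical in
/-- The timestamp-merging addition `⊕`: merge the two series by timestamps, adding the
spatial values at coinciding timestamps and deleting resulting zero values. -/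
def tsAdd {S : Type*} [AddCommGroup S] :
    List (ℝ × S) → List (ℝ × S) → List (ℝ × S)
  | [], l => l
  | l, [] => l
  | (t, a) :: A, (u, b) :: B =>
      if u < t then (t, a) :: tsAdd A ((u, b) :: B)
      else if t < u then (u, b) :: tsAdd ((t, a) :: A) B
      else if a + b = 0 then tsAdd A B
      else (t, a + b) :: tsAdd A B
  termination_by A B => A.length + B.length


open Classical in
/-- Scalar multiplication `⊗`: scale every spatial value, deleting everything if `λ = 0`. -/
def tsSmul {S : Type*} [AddCommGroup S] [Module ℝ S] (r : ℝ) (l : List (ℝ × S)) :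
    List (ℝ × S) :=
  if r = 0 then [] else l.map fun p => (p.1, r • p.2)

/-- `ip` is an inner product on `(U*, ⊕, ⊗)`: symmetric, bilinear
(linearity in the first argument together with symmetry), and positive definite. -/
structure IsInnerOnTS {S : Type*} [AddCommGroup S] [Module ℝ S]
    (ip : List (ℝ × S) → List (ℝ × S) → ℝ) : Prop where
  symm : ∀ A B, IsTS A → IsTS B → ip A B = ip B A
  add_left : ∀ A B C, IsTS A → IsTS B → IsTS C → ip (tsAdd A B) C = ip A C + ip B C
  smul_left : ∀ (r : ℝ) A B, IsTS A → IsTS B → ip (tsSmul r A) B = r * ip A B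
  nonneg : ∀ A, IsTS A → 0 ≤ ip A A
  definite : ∀ A, IsTS A → (ip A A = 0 ↔ A = [])

section ElasticProduct

variable {S : Type*} (f : S → S → ℝ) (g : ℝ → ℝ → ℝ)

/-- With `α = 1, β = -1, ξ = 0` the two `α`-terms double count exactly the `β`-term, so the
recursion unfolds to the full double sum over all pairs of samples. -/
theorem ep_one_neg_one_zero_eq_sum (A B : List (ℝ × S)) :
    ep f g 1 (-1) 0 A B = (A.map fun p => (B.map fun q => f p.2 q.2 * g p.1 q.1).sum).sum := by
  induction A generalizing B with
  | nil => simp [ep]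
  | cons p A ihA =>
    induction B with
    | nil => simp [ep]
    | cons q B ihB =>
      obtain ⟨s, x⟩ := p
      obtain ⟨s', y⟩ := q
      rw [ep, ihA, ihA, ihB]
      simp only [List.map_cons, List.sum_cons, List.sum_map_add]
      ring

theorem ep_one_neg_one_zero_ofFn_reverse {m n : ℕ} (s : Fin m → ℝ) (x : Fin m → S)
    (s' : Fin n → ℝ) (y : Fin n → S) :
    ep f g 1 (-1) 0 (List.ofFn fun i => (s i, x i)).reverse (List.ofFn fun j => (s' j, y j)).reverse
      = ∑ i, ∑ j, f (x i) (y j) * g (s i) (s' j) := by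
  simp [ep_one_neg_one_zero_eq_sum, List.map_reverse, List.sum_reverse, List.map_ofFn,
    List.sum_ofFn, Function.comp_def]

end ElasticProduct

theorem tendsto_exp_neg_mul_sq_abs_sub_atTop (u v : ℝ) :
    Filter.Tendsto (fun ν : ℝ => Real.exp (-(ν * |u - v| ^ 2))) Filter.atTop
      (nhds (if u = v then 1 else 0)) := by
  by_cases huv : u = v
  · simp [huv]
  · have hpos : 0 < |u - v| ^ 2 := by
      have := sub_ne_zero.mpr huv
      positivity
    rw [if_neg huv]
    exact Real.tendsto_exp_atBot.comp <| Filter.tendsto_neg_atTop_atBot.comp <|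
      Filter.tendsto_id.atTop_mul_const hpos

theorem eip_tendsto_euclidean_general
    (n : ℕ) (t : Fin n → ℝ) (ht : StrictMono t)
    (a b : Fin n → ℝ) :
    Filter.Tendsto
      (fun ν : ℝ =>
        ep (fun x y : ℝ => x * y)
          (fun u v => Real.exp (-(ν * |u - v| ^ 2))) 1 (-1) 0
          ((List.ofFn fun i : Fin n => (t i, a i)).reverse)
          ((List.ofFn fun i : Fin n => (t i, b i)).reverse))
      Filter.atTop (nhds (∑ i : Fin n, a i * b i)) := by
  simp only [ep_one_neg_one_zero_ofFn_reverse]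
  have hdiag : ∑ i, a i * b i = ∑ i, ∑ j, a i * b j * (if t i = t j then 1 else 0) := by
    simp [ht.injective.eq_iff]
  rw [hdiag]
  exact tendsto_finsetSum _ fun i _ => tendsto_finsetSum _ fun j _ =>
    (tendsto_exp_neg_mul_sq_abs_sub_atTop (t i) (t j)).const_mul _

/-- on time series of fixed length `n` over a fixed strictly increasing
timestamp grid `t₁ < ... < t_n` with nonzero real values, the elastic inner product built
from `f(a,b) = a·b` and `g_ν(t,t') = exp(-ν|t-t'|²)` converges pointwise, as `ν → ∞`,
to the Euclidean inner product `∑ i, a(i)·b(i)`. -/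
theorem eip_tendsto_euclidean
    (n : ℕ) (t : Fin n → ℝ) (ht : StrictMono t)
    (a b : Fin n → ℝ) (ha : ∀ i, a i ≠ 0) (hb : ∀ i, b i ≠ 0) :
    Filter.Tendsto
      (fun ν : ℝ =>
        ep (fun x y : ℝ => x * y)
          (fun u v => Real.exp (-(ν * |u - v| ^ 2))) 1 (-1) 0
          ((List.ofFn fun i : Fin n => (t i, a i)).reverse)
          ((List.ofFn fun i : Fin n => (t i, b i)).reverse))
      Filter.atTop (nhds (∑ i : Fin n, a i * b i)) :=
  eip_tendsto_euclidean_general n t ht a b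

end
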